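/- arXiv:math/0310130 — 3 statements merged into one kernel-verified Lean document; each statement's English description precedes it below -/
import Mathlib

section
/- Truncating a Gröbner basis of a homogeneous ideal gives a truncated Gröbner basis of the truncated ideal: let the grading given by W be positive, let σ be a term ordering on ℕ^n, let G be a set of nonzero W-homogeneous polynomials generating an ideal I and forming a σ-Gröbner basis of I, i.e. for every nonzero v ∈ I there exists g ∈ G with deg_σ(g) ≤ deg_σ(v) componentwise. Fix D ∈ ℤ^m and let I' be the ideal generated by all W-homogeneous elements of I of W-degree ≤_Lex D. Then for every nonzero W-homogeneous v ∈ I' with deg_W(v) ≤_Lex D there exists g ∈ G whose W-degree is ≤_Lex D and such that deg_σ(g) ≤ deg_σ(v) componentwise. -/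
open MvPolynomial

/-- The `W`-degree of an exponent vector `α ∈ ℕ^n`: `W·α = ∑ⱼ αⱼ w⁽ʲ⁾ ∈ ℤ^m`. -/
def wdeg {m n : ℕ} (W : Matrix (Fin m) (Fin n) ℤ) (α : Fin n →₀ ℕ) : Fin m → ℤ :=
  fun i => ∑ j, (α j : ℤ) * W i j

/-- A polynomial is `W`-homogeneous of degree `d ∈ ℤ^m` if every monomial in its support
has `W`-degree `d`. -/
def IsWHomogeneous {K : Type*} [CommSemiring K] {m n : ℕ} (W : Matrix (Fin m) (Fin n) ℤ)
    (p : MvPolynomial (Fin n) K) (d : Fin m → ℤ) : Prop :=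
  ∀ α ∈ p.support, wdeg W α = d

/-- The grading given by `W` is positive: the rows of `W` are `ℤ`-linearly independent,
no column of `W` is zero, and the first non-zero entry of each column of `W` is positive. -/
def PositiveGrading {m n : ℕ} (W : Matrix (Fin m) (Fin n) ℤ) : Prop :=
  LinearIndependent ℤ (fun i : Fin m => (fun j => W i j : Fin n → ℤ)) ∧
  (∀ j : Fin n, ∃ i : Fin m, W i j ≠ 0) ∧
  (∀ j : Fin n, ∃ i : Fin m, 0 < W i j ∧ ∀ i' < i, W i' j = 0)

/-- The `σ`-degree (exponent of the `σ`-leading term) of a polynomial: the `σ`-largest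
exponent vector in its support. -/
noncomputable def mdeg {K : Type*} [CommSemiring K] {n : ℕ} (σ : MonomialOrder (Fin n))
    (f : MvPolynomial (Fin n) K) : Fin n →₀ ℕ :=
  σ.toSyn.symm (f.support.sup fun α => σ.toSyn α)

/-! Since `I' ⊆ I`, the Gröbner basis property yields `g ∈ G` whose leading exponent divides
that of `v`. For a positive grading every column of `W` is `Lex`-nonnegative, so `W`-degree is
`Lex`-monotone under divisibility of monomials; as `g` and `v` are homogeneous, their
`W`-degrees are those of their leading monomials, whence `deg_W g ≤ deg_W v ≤ D`. -/

open scoped Matrix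

lemma wdeg_eq_sum_nsmul_col {m n : ℕ} (W : Matrix (Fin m) (Fin n) ℤ) (α : Fin n →₀ ℕ) :
    wdeg W α = ∑ j, α j • Wᵀ j := by
  funext i
  simp [wdeg, Finset.sum_apply, nsmul_eq_mul]

lemma wdeg_add {m n : ℕ} (W : Matrix (Fin m) (Fin n) ℤ) (a b : Fin n →₀ ℕ) :
    wdeg W (a + b) = wdeg W a + wdeg W b := by
  simp only [wdeg_eq_sum_nsmul_col, Finsupp.add_apply, add_smul, Finset.sum_add_distrib]

lemma toLex_col_nonneg {m n : ℕ} {W : Matrix (Fin m) (Fin n) ℤ} {j : Fin n}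
    (hj : ∃ i, 0 < W i j ∧ ∀ i' < i, W i' j = 0) : 0 ≤ toLex (Wᵀ j) := by
  obtain ⟨i, hpos, hzero⟩ := hj
  exact le_of_lt ⟨i, fun i' hi' => (hzero i' hi').symm, hpos⟩

lemma toLex_wdeg_nonneg {m n : ℕ} {W : Matrix (Fin m) (Fin n) ℤ}
    (hW : ∀ j, ∃ i, 0 < W i j ∧ ∀ i' < i, W i' j = 0) (α : Fin n →₀ ℕ) :
    0 ≤ toLex (wdeg W α) := by
  rw [wdeg_eq_sum_nsmul_col]
  change 0 ≤ ∑ j, α j • toLex (Wᵀ j)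
  exact Finset.sum_nonneg fun j _ => nsmul_nonneg (toLex_col_nonneg (hW j)) _

lemma toLex_wdeg_mono {m n : ℕ} {W : Matrix (Fin m) (Fin n) ℤ}
    (hW : ∀ j, ∃ i, 0 < W i j ∧ ∀ i' < i, W i' j = 0) {a b : Fin n →₀ ℕ} (hab : a ≤ b) :
    toLex (wdeg W a) ≤ toLex (wdeg W b) := by
  rw [← add_tsub_cancel_of_le hab, wdeg_add]
  exact le_add_of_nonneg_right (toLex_wdeg_nonneg hW _)

lemma mdeg_mem_support {K : Type*} [CommSemiring K] {n : ℕ} (σ : MonomialOrder (Fin n))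
    {f : MvPolynomial (Fin n) K} (hf : f ≠ 0) : mdeg σ f ∈ f.support := by
  obtain ⟨a, ha, hsup⟩ := Finset.exists_mem_eq_sup f.support (support_nonempty.mpr hf)
    (fun α => σ.toSyn α)
  rw [mdeg, hsup]
  simpa using ha

lemma IsWHomogeneous.wdeg_mdeg {K : Type*} [CommSemiring K] {m n : ℕ}
    {W : Matrix (Fin m) (Fin n) ℤ} {p : MvPolynomial (Fin n) K} {d : Fin m → ℤ}
    (hp : IsWHomogeneous W p d) (σ : MonomialOrder (Fin n)) (hp0 : p ≠ 0) :
    wdeg W (mdeg σ p) = d :=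
  hp _ (mdeg_mem_support σ hp0)

/-- Truncating a Gröbner basis of a homogeneous ideal gives a truncated Gröbner basis of
the truncated ideal: if `G` is a `σ`-Gröbner basis of `I` consisting of nonzero
`W`-homogeneous polynomials and `I\'` is the ideal generated by the `W`-homogeneous
elements of `I` of `W`-degree `≤_Lex D`, then every nonzero `W`-homogeneous `v ∈ I\'` of
`W`-degree `≤_Lex D` has its leading term divisible by the leading term of some `g ∈ G`
of `W`-degree `≤_Lex D`. -/
theorem stmt_8 {K : Type*} [Field K] {m n : ℕ} (W : Matrix (Fin m) (Fin n) ℤ)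
    (hW : PositiveGrading W) (σ : MonomialOrder (Fin n))
    (G : Set (MvPolynomial (Fin n) K)) (hG0 : ∀ g ∈ G, g ≠ 0)
    (hGhom : ∀ g ∈ G, ∃ d : Fin m → ℤ, IsWHomogeneous W g d)
    (hGB : ∀ v ∈ Ideal.span G, v ≠ 0 → ∃ g ∈ G, mdeg σ g ≤ mdeg σ v)
    (D : Fin m → ℤ) :
    ∀ v ∈ Ideal.span {u : MvPolynomial (Fin n) K |
        u ∈ Ideal.span G ∧ ∃ e : Fin m → ℤ, IsWHomogeneous W u e ∧ toLex e ≤ toLex D},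
      v ≠ 0 → ∀ e : Fin m → ℤ, IsWHomogeneous W v e → toLex e ≤ toLex D →
      ∃ g ∈ G, (∃ dg : Fin m → ℤ, IsWHomogeneous W g dg ∧ toLex dg ≤ toLex D) ∧
        mdeg σ g ≤ mdeg σ v := by
  intro v hv hv0 e hve heD
  have hvG : v ∈ Ideal.span G := Ideal.span_le.mpr (fun u hu => hu.1) hv
  obtain ⟨g, hgG, hgv⟩ := hGB v hvG hv0
  obtain ⟨d, hgd⟩ := hGhom g hgG
  refine ⟨g, hgG, ⟨d, hgd, ?_⟩, hgv⟩
  calc toLex d = toLex (wdeg W (mdeg σ g)) := by rw [hgd.wdeg_mdeg σ (hG0 g hgG)]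
    _ ≤ toLex (wdeg W (mdeg σ v)) := toLex_wdeg_mono hW.2.2 hgv
    _ = toLex e := by rw [hve.wdeg_mdeg σ hv0]
    _ ≤ toLex D := heD
end

section
/- Extraction of a minimal generating subset: let the grading given by W be positive, fix shifts δ_1,…,δ_r ∈ ℤ^m, and let g_1,…,g_s ∈ P^r be homogeneous vectors, g_k of degree d_k ∈ ℤ^m, with d_1 ≤_Lex d_2 ≤_Lex ⋯ ≤_Lex d_s, and let M = Span_P(g_1,…,g_s). Let T = {k ∈ {1,…,s} : g_k ∉ Span_P(g_1,…,g_{k−1})}. Then {g_k : k ∈ T} is a minimal system of generators of M: Span_P({g_k : k ∈ T}) = M, and for every k ∈ T one has g_k ∉ Span_P({g_j : j ∈ T, j ≠ k}). -/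
open MvPolynomial

/-- A vector `v ∈ P^r` is homogeneous of degree `d ∈ ℤ^m` (with respect to the shifts `δ`)
if each component `v i` is `W`-homogeneous of degree `d - δ i`. -/
def IsWHomogeneousVec {K : Type*} [CommSemiring K] {m n r : ℕ} (W : Matrix (Fin m) (Fin n) ℤ)
    (δ : Fin r → Fin m → ℤ) (v : Fin r → MvPolynomial (Fin n) K) (d : Fin m → ℤ) : Prop :=
  ∀ i : Fin r, ∀ α ∈ (v i).support, wdeg W α = d - δ i

/-!
The span equality holds for any family indexed by a well-order, since every `g k` outside `T`
lies in the span of its predecessors. For minimality, suppose `g k` with `k ∈ T` is a combination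
of the `g j`, `j ∈ T \ {k}`. Taking homogeneous components of degree `d k`, the coefficient of
`g j` may be taken homogeneous of degree `d k - d j`; for `j > k` this degree is `≤ 0` in `Lex`,
so positivity of the grading makes the coefficient a constant. In the relation
`∑ c j • g j - g k = 0` the largest index `j₀` with a nonzero coefficient thus has a unit
coefficient and lies in `T`, yet the relation puts `g j₀` in the span of its predecessors.
-/

section OrderedSpan

variable {R M ι : Type*} [LinearOrder ι]

theorem span_image_setOf_notMem_span_Iio [Semiring R] [AddCommMonoid M] [Module R M]
    [WellFoundedLT ι] (g : ι → M) :
    Submodule.span R (g '' {k | g k ∉ Submodule.span R (g '' {j | j < k})}) =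
      Submodule.span R (Set.range g) := by
  refine le_antisymm (Submodule.span_mono (Set.image_subset_range _ _)) ?_
  rw [Submodule.span_le, Set.range_subset_iff]
  intro k
  induction k using WellFoundedLT.induction with
  | _ k ih =>
    by_cases hk : g k ∈ Submodule.span R (g '' {j | j < k})
    · exact Submodule.span_le.2 (Set.image_subset_iff.2 fun j hj => ih j hj) hk
    · exact Submodule.subset_span ⟨k, hk, rfl⟩

variable [Ring R] [AddCommGroup M] [Module R M]

theorem mem_span_image_Iio_of_linearCombination_eq_zero {g : ι → M} {u : ι →₀ R}
    (hu : Finsupp.linearCombination R g u = 0) {j₀ : ι} (hj₀ : ∀ j ∈ u.support, j ≤ j₀)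
    (hunit : IsUnit (u j₀)) : g j₀ ∈ Submodule.span R (g '' {j | j < j₀}) := by
  have hlower : Finsupp.linearCombination R g (u.erase j₀) ∈
      Submodule.span R (g '' {j | j < j₀}) := by
    refine (Finsupp.mem_span_image_iff_linearCombination R).2 ⟨_, fun j hj => ?_, rfl⟩
    rw [Finset.mem_coe, Finsupp.support_erase, Finset.mem_erase] at hj
    exact lt_of_le_of_ne (hj₀ j hj.2) hj.1
  have hsplit := congrArg (Finsupp.linearCombination R g) (Finsupp.single_add_erase j₀ u)
  rw [map_add, Finsupp.linearCombination_single, hu] at hsplit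
  rw [← Submodule.smul_mem_iff_of_isUnit _ hunit, eq_neg_of_add_eq_zero_left hsplit]
  exact neg_mem hlower

theorem linearCombination_ne_of_notMem_span_Iio {g : ι → M} {k : ι}
    (hk : g k ∉ Submodule.span R (g '' {j | j < k})) {c : ι →₀ R}
    (hc : ↑c.support ⊆ {j | g j ∉ Submodule.span R (g '' {i | i < j})} \ {k})
    (hunit : ∀ j ∈ c.support, k < j → IsUnit (c j)) :
    Finsupp.linearCombination R g c ≠ g k := by
  intro hck
  have hck0 : c k = 0 := Finsupp.notMem_support_iff.1 fun h => (hc h).2 rfl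
  obtain ⟨j₀, hj₀, hj₀max⟩ : ∃ j₀ ∈ insert k c.support, ∀ j ∈ insert k c.support, j ≤ j₀ :=
    ⟨_, Finset.max'_mem _ (Finset.insert_nonempty _ _), fun j => Finset.le_max' _ j⟩
  have hrel : Finsupp.linearCombination R g (c - Finsupp.single k 1) = 0 := by
    rw [map_sub, hck, Finsupp.linearCombination_single, one_smul, sub_self]
  have htop : ∀ j ∈ (c - Finsupp.single k 1).support, j ≤ j₀ := by
    intro j hj
    refine hj₀max j ?_
    rcases Finset.mem_union.1 (Finsupp.support_sub hj) with hj | hj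
    · exact Finset.mem_insert_of_mem hj
    · exact Finset.mem_insert.2 (.inl (Finset.mem_singleton.1 (Finsupp.support_single_subset hj)))
  rcases Finset.mem_insert.1 hj₀ with rfl | hj₀c
  · refine hk (mem_span_image_Iio_of_linearCombination_eq_zero hrel htop ?_)
    simp [hck0]
  · have hkj₀ : k < j₀ := lt_of_le_of_ne (hj₀max k (Finset.mem_insert_self _ _))
      fun h => (hc hj₀c).2 h.symm
    refine (hc hj₀c).1 (mem_span_image_Iio_of_linearCombination_eq_zero hrel htop ?_)
    rw [Finsupp.coe_sub, Pi.sub_apply, Finsupp.single_eq_of_ne hkj₀.ne', sub_zero]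
    exact hunit j₀ hj₀c hkj₀

end OrderedSpan

section Weighted

variable {R M σ κ ι : Type*} [CommSemiring R] [AddCommGroup M]

theorem weightedHomogeneousComponent_mul_of_isWeightedHomogeneous_right {w : σ → M}
    {q : MvPolynomial σ R} {j : M} (hq : IsWeightedHomogeneous w q j)
    (p : MvPolynomial σ R) (e : M) :
    weightedHomogeneousComponent w e (p * q) = weightedHomogeneousComponent w (e - j) p * q := by
  classical
  let := weightedGradedAlgebra R w
  have := DirectSum.coe_decompose_mul_add_of_right_mem (weightedHomogeneousSubmodule R w)
    (a := p) (i := e - j) hq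
  rw [sub_add_cancel] at this
  rwa [← weightedDecomposition.decompose'_apply, ← weightedDecomposition.decompose'_apply]

variable (w : σ → M) (δ : κ → M)

noncomputable def shiftedHomogeneousComponent (e : M) :
    (κ → MvPolynomial σ R) →ₗ[R] (κ → MvPolynomial σ R) :=
  LinearMap.pi fun i => weightedHomogeneousComponent w (e - δ i) ∘ₗ LinearMap.proj i

variable {w δ}

theorem shiftedHomogeneousComponent_of_isWeightedHomogeneous {v : κ → MvPolynomial σ R} {e : M}
    (hv : ∀ i, IsWeightedHomogeneous w (v i) (e - δ i)) :
    shiftedHomogeneousComponent w δ e v = v :=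
  funext fun i => (hv i).weightedHomogeneousComponent_same

theorem shiftedHomogeneousComponent_smul {v : κ → MvPolynomial σ R} {d : M}
    (hv : ∀ i, IsWeightedHomogeneous w (v i) (d - δ i)) (p : MvPolynomial σ R) (e : M) :
    shiftedHomogeneousComponent w δ e (p • v) = weightedHomogeneousComponent w (e - d) p • v := by
  funext i
  simp only [shiftedHomogeneousComponent, LinearMap.pi_apply, LinearMap.comp_apply,
    LinearMap.proj_apply, Pi.smul_apply, smul_eq_mul,
    weightedHomogeneousComponent_mul_of_isWeightedHomogeneous_right (hv i),
    sub_sub_sub_cancel_right]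

theorem exists_isWeightedHomogeneous_linearCombination_of_mem_span
    {g : ι → κ → MvPolynomial σ R} {d : ι → M}
    (hg : ∀ j i, IsWeightedHomogeneous w (g j i) (d j - δ i)) {v : κ → MvPolynomial σ R}
    {e : M} (hv : ∀ i, IsWeightedHomogeneous w (v i) (e - δ i)) {A : Set ι}
    (hvA : v ∈ Submodule.span (MvPolynomial σ R) (g '' A)) :
    ∃ c : ι →₀ MvPolynomial σ R, ↑c.support ⊆ A ∧
      Finsupp.linearCombination (MvPolynomial σ R) g c = v ∧
      ∀ j, IsWeightedHomogeneous w (c j) (e - d j) := by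
  obtain ⟨l, hlA, rfl⟩ := (Finsupp.mem_span_image_iff_linearCombination _).1 hvA
  let c := Finsupp.onFinset l.support (fun j => weightedHomogeneousComponent w (e - d j) (l j))
    fun j hj => Finsupp.mem_support_iff.2 fun h => hj (by rw [h, map_zero])
  refine ⟨c, (Finset.coe_subset.2 Finsupp.support_onFinset_subset).trans hlA, ?_,
    fun j => weightedHomogeneousComponent_isWeightedHomogeneous _ _⟩
  rw [Finsupp.linearCombination_onFinset,
    ← shiftedHomogeneousComponent_of_isWeightedHomogeneous hv, Finsupp.linearCombination_apply,
    Finsupp.sum, map_sum]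
  exact Finset.sum_congr rfl fun j _ => (shiftedHomogeneousComponent_smul (hg j) _ _).symm

end Weighted

theorem MvPolynomial.IsWeightedHomogeneous.eq_C_of_nonpos {R M σ : Type*} [CommSemiring R]
    [AddCommMonoid M] [PartialOrder M] [IsOrderedAddMonoid M] {w : σ → M} (hw : ∀ i, 0 < w i)
    {p : MvPolynomial σ R} {e : M} (hp : IsWeightedHomogeneous w p e) (he : e ≤ 0) :
    p = C (coeff 0 p) := by
  rw [← totalDegree_eq_zero_iff_eq_C, totalDegree_eq_zero_iff]
  intro α hα i
  by_contra hαi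
  have hle := Finsupp.le_weight_of_ne_zero (fun i => (hw i).le) hαi
  rw [hp (mem_support_iff.1 hα)] at hle
  exact (hw i).not_ge (hle.trans he)

section Lex

variable {m n : ℕ} (W : Matrix (Fin m) (Fin n) ℤ)

def lexColumn (j : Fin n) : Lex (Fin m → ℤ) :=
  toLex fun i => W i j

theorem weight_lexColumn (α : Fin n →₀ ℕ) :
    Finsupp.weight (lexColumn W) α = toLex (wdeg W α) := by
  rw [Finsupp.weight_eq_sum]
  change (∑ j, α j • fun i => W i j : Fin m → ℤ) = fun i => ∑ j, (α j : ℤ) * W i j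
  funext i
  simp [Finset.sum_apply]

variable {W}

theorem lexColumn_pos (hW : ∀ j : Fin n, ∃ i : Fin m, 0 < W i j ∧ ∀ i' < i, W i' j = 0)
    (j : Fin n) : 0 < lexColumn W j := by
  obtain ⟨i, hi, hbefore⟩ := hW j
  exact ⟨i, fun i' hi' => (hbefore i' hi').symm, hi⟩

theorem IsWHomogeneousVec.isWeightedHomogeneous {K : Type*} [CommSemiring K] {r : ℕ}
    {δ : Fin r → Fin m → ℤ} {v : Fin r → MvPolynomial (Fin n) K} {d : Fin m → ℤ}
    (hv : IsWHomogeneousVec W δ v d) (i : Fin r) :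
    IsWeightedHomogeneous (lexColumn W) (v i) (toLex d - toLex (δ i)) := fun α hα => by
  rw [weight_lexColumn, hv i α (mem_support_iff.2 hα)]
  rfl

end Lex

/-- Extraction of a minimal generating subset: for homogeneous vectors `g_1,…,g_s ∈ P^r`
with `Lex`-increasing degrees and `T = {k : g_k ∉ Span_P(g_1,…,g_(k−1))}`, the family
`{g_k : k ∈ T}` is a minimal system of generators of `M = Span_P(g_1,…,g_s)`. -/
theorem stmt_11 {K : Type*} [Field K] {m n r s : ℕ} (W : Matrix (Fin m) (Fin n) ℤ)
    (hW : PositiveGrading W) (δ : Fin r → Fin m → ℤ)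
    (g : Fin s → (Fin r → MvPolynomial (Fin n) K)) (d : Fin s → Fin m → ℤ)
    (hgh : ∀ k, IsWHomogeneousVec W δ (g k) (d k))
    (hord : ∀ j k : Fin s, j ≤ k → toLex (d j) ≤ toLex (d k)) :
    Submodule.span (MvPolynomial (Fin n) K)
        (g '' {k | g k ∉ Submodule.span (MvPolynomial (Fin n) K) (g '' {j | j < k})}) =
      Submodule.span (MvPolynomial (Fin n) K) (Set.range g) ∧
    ∀ k, g k ∉ Submodule.span (MvPolynomial (Fin n) K) (g '' {j | j < k}) →
      g k ∉ Submodule.span (MvPolynomial (Fin n) K)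
        (g '' ({j | g j ∉ Submodule.span (MvPolynomial (Fin n) K) (g '' {i | i < j})} \ {k})) := by
  refine ⟨span_image_setOf_notMem_span_Iio g, fun k hk hmem => ?_⟩
  have hhom := fun j => (hgh j).isWeightedHomogeneous
  obtain ⟨c, hcT, hcg, hc⟩ :=
    exists_isWeightedHomogeneous_linearCombination_of_mem_span hhom (hhom k) hmem
  refine linearCombination_ne_of_notMem_span_Iio hk hcT (fun j hj hkj => ?_) hcg
  have hcj : c j = C (coeff 0 (c j)) :=
    (hc j).eq_C_of_nonpos (lexColumn_pos hW.2.2) (sub_nonpos.2 (hord k j hkj.le))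
  rw [Finsupp.mem_support_iff, hcj, Ne, C_eq_zero] at hj
  rw [hcj]
  exact (Ne.isUnit hj).map C
end

section
/- Adding a top-degree generator preserves minimality: let the grading given by W be positive, fix shifts δ_1,…,δ_r ∈ ℤ^m, and let g_1,…,g_s ∈ P^r be homogeneous vectors, g_k of degree d_k ∈ ℤ^m, forming a minimal system of generators of M = Span_P(g_1,…,g_s), i.e. g_k ∉ Span_P({g_j : j ≠ k}) for every k. Let g_{s+1} ∈ P^r be a homogeneous vector of degree d_{s+1} with g_{s+1} ∉ M and d_k ≤_Lex d_{s+1} for all k = 1,…,s. Then {g_1,…,g_s,g_{s+1}} is a minimal system of generators of M + Span_P(g_{s+1}): for every k ∈ {1,…,s+1}, g_k ∉ Span_P({g_j : 1 ≤ j ≤ s+1, j ≠ k}). -/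
/-!
Grade `P = K[x]` by the columns of `W`, viewed in `ℤ^m` with the lexicographic order; positivity
of the grading makes every non-constant monomial of positive degree. Suppose
`g_k = q • h + z` with `z` in the span of the other `g_j`. Taking the degree-`d_k` component of
both sides, and using that the span of homogeneous vectors is closed under taking components,
`q` may be replaced by its component of degree `d_k - d_h ≤ 0`, which is a constant `a`. If
`a = 0` this contradicts the minimality of the `g_j`; otherwise it puts `h` in `M`.
-/

open MvPolynomial

theorem Finsupp.weight_pos_of_ne_zero {σ M : Type*} [AddCommMonoid M] [PartialOrder M]
    [IsOrderedAddMonoid M] {w : σ → M} (hw : ∀ i, 0 < w i) {d : σ →₀ ℕ} (hd : d ≠ 0) :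
    0 < Finsupp.weight w d := by
  obtain ⟨i, hi⟩ := Finsupp.ne_iff.mp hd
  exact (hw i).trans_le (Finsupp.le_weight_of_ne_zero (fun j => (hw j).le) hi)

namespace MvPolynomial

variable {R σ M : Type*}

theorem weightedHomogeneousComponent_eq_C_of_nonpos [CommSemiring R] [AddCommMonoid M]
    [PartialOrder M] [IsOrderedAddMonoid M] {w : σ → M} (hw : ∀ i, 0 < w i) {e : M} (he : e ≤ 0)
    (φ : MvPolynomial σ R) :
    weightedHomogeneousComponent w e φ = C (coeff 0 (weightedHomogeneousComponent w e φ)) := by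
  classical
  ext d
  rcases eq_or_ne d 0 with rfl | hd
  · simp
  · rw [coeff_C, if_neg (Ne.symm hd), coeff_weightedHomogeneousComponent,
      if_neg (he.trans_lt (Finsupp.weight_pos_of_ne_zero hw hd)).ne']

theorem weightedHomogeneousComponent_mul_of_isWeightedHomogeneous [CommSemiring R]
    [AddCommGroup M] {w : σ → M} {c : M} {p : MvPolynomial σ R} (hp : p.IsWeightedHomogeneous w c)
    (q : MvPolynomial σ R) (e : M) :
    weightedHomogeneousComponent w e (q * p) = weightedHomogeneousComponent w (e - c) q * p := by
  classical
  let := weightedGradedAlgebra R w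
  have := DirectSum.coe_decompose_mul_add_of_right_mem (weightedHomogeneousSubmodule R w)
    (i := e - c) (a := q) hp
  rw [sub_add_cancel] at this
  rwa [← weightedDecomposition.decompose'_apply R w, ← weightedDecomposition.decompose'_apply R w]

section Vec

variable [CommSemiring R] [AddCommGroup M] (w : σ → M) {ι : Type*} (δ : ι → M)

def IsWeightedHomogeneousVec (v : ι → MvPolynomial σ R) (e : M) : Prop :=
  ∀ i, (v i).IsWeightedHomogeneous w (e - δ i)

/-- The degree-`e` component in the graded free module `⊕ᵢ P(-δ i)`. -/
noncomputable def weightedHomogeneousComponentVec (e : M) :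
    (ι → MvPolynomial σ R) →ₗ[R] (ι → MvPolynomial σ R) :=
  LinearMap.pi fun i => weightedHomogeneousComponent w (e - δ i) ∘ₗ LinearMap.proj i

@[simp]
theorem weightedHomogeneousComponentVec_apply (e : M) (v : ι → MvPolynomial σ R) (i : ι) :
    weightedHomogeneousComponentVec w δ e v i = weightedHomogeneousComponent w (e - δ i) (v i) :=
  rfl

variable {w δ}

theorem IsWeightedHomogeneousVec.weightedHomogeneousComponentVec_same
    {v : ι → MvPolynomial σ R} {e : M} (hv : IsWeightedHomogeneousVec w δ v e) :
    weightedHomogeneousComponentVec w δ e v = v := by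
  funext i
  exact (hv i).weightedHomogeneousComponent_same

theorem IsWeightedHomogeneousVec.weightedHomogeneousComponentVec_smul
    {v : ι → MvPolynomial σ R} {c : M} (hv : IsWeightedHomogeneousVec w δ v c)
    (q : MvPolynomial σ R) (e : M) :
    weightedHomogeneousComponentVec w δ e (q • v) =
      weightedHomogeneousComponent w (e - c) q • v := by
  funext i
  simp only [weightedHomogeneousComponentVec_apply, Pi.smul_apply, smul_eq_mul]
  rw [weightedHomogeneousComponent_mul_of_isWeightedHomogeneous (hv i), sub_sub_sub_cancel_right]

theorem weightedHomogeneousComponentVec_mem_span {β : Type*} {v : β → ι → MvPolynomial σ R}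
    {c : β → M} (hv : ∀ j, IsWeightedHomogeneousVec w δ (v j) (c j)) {s : Set β}
    {x : ι → MvPolynomial σ R} (hx : x ∈ Submodule.span (MvPolynomial σ R) (v '' s)) (e : M) :
    weightedHomogeneousComponentVec w δ e x ∈ Submodule.span (MvPolynomial σ R) (v '' s) := by
  obtain ⟨l, hl, rfl⟩ := Finsupp.mem_span_image_iff_linearCombination _ |>.mp hx
  rw [Finsupp.linearCombination_apply, Finsupp.sum, map_sum]
  refine Submodule.sum_mem _ fun j hj => ?_
  rw [(hv j).weightedHomogeneousComponentVec_smul]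
  exact Submodule.smul_mem _ _ (Submodule.subset_span (Set.mem_image_of_mem v (hl hj)))

end Vec

theorem IsWeightedHomogeneousVec.notMem_span_insert [Field R] [AddCommGroup M] [PartialOrder M]
    [IsOrderedAddMonoid M] {w : σ → M} (hw : ∀ i, 0 < w i) {ι β : Type*} {δ : ι → M}
    {v : β → ι → MvPolynomial σ R} {c : β → M} (hv : ∀ j, IsWeightedHomogeneousVec w δ (v j) (c j))
    {x : ι → MvPolynomial σ R} {cx : M} (hx : IsWeightedHomogeneousVec w δ x cx) {s : Set β}
    {k : β} (hk : v k ∉ Submodule.span (MvPolynomial σ R) (v '' s))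
    (hxs : x ∉ Submodule.span (MvPolynomial σ R) (v '' insert k s)) (hle : c k ≤ cx) :
    v k ∉ Submodule.span (MvPolynomial σ R) (insert x (v '' s)) := by
  intro hmem
  obtain ⟨q, z, hz, hkz⟩ := Submodule.mem_span_insert.mp hmem
  set a := coeff 0 (weightedHomogeneousComponent w (c k - cx) q)
  set z' := weightedHomogeneousComponentVec w δ (c k) z
  have hz' : z' ∈ Submodule.span (MvPolynomial σ R) (v '' s) :=
    weightedHomogeneousComponentVec_mem_span hv hz (c k)
  have hproj : v k = (C a : MvPolynomial σ R) • x + z' := by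
    conv_lhs => rw [← (hv k).weightedHomogeneousComponentVec_same, hkz]
    rw [map_add, hx.weightedHomogeneousComponentVec_smul,
      ← weightedHomogeneousComponent_eq_C_of_nonpos hw (sub_nonpos.2 hle)]
  by_cases ha : a = 0
  · rw [ha, C_0, zero_smul, zero_add] at hproj
    exact hk (hproj ▸ hz')
  · have hx_eq : x = (C a⁻¹ : MvPolynomial σ R) • (v k - z') := by
      rw [hproj, add_sub_cancel_right, smul_smul, ← C_mul, inv_mul_cancel₀ ha, C_1, one_smul]
    refine hxs (hx_eq ▸ Submodule.smul_mem _ _ (Submodule.sub_mem _ ?_ ?_))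
    · exact Submodule.subset_span (Set.mem_image_of_mem v (Set.mem_insert k s))
    · exact Submodule.span_mono (Set.image_mono (Set.subset_insert k s)) hz'

end MvPolynomial

theorem Fin.snoc_image_ne_last {n : ℕ} {α : Type*} (f : Fin n → α) (x : α) :
    Fin.snoc f x '' {j | j ≠ Fin.last n} = Set.range f := by
  ext y
  simp [Fin.exists_fin_succ', Fin.castSucc_ne_last]

theorem Fin.snoc_image_ne_castSucc {n : ℕ} {α : Type*} (f : Fin n → α) (x : α) (k : Fin n) :
    Fin.snoc f x '' {j | j ≠ k.castSucc} = insert x (f '' {j | j ≠ k}) := by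
  ext y
  simp [Fin.exists_fin_succ', (Fin.castSucc_ne_last k).symm, or_comm, eq_comm]

section WeightMatrix

variable {m n : ℕ} (W : Matrix (Fin m) (Fin n) ℤ)

/-- The columns of `W` as weights in `Lex (Fin m → ℤ)`, so that the order of the grading monoid
is the lexicographic one. -/
def colWeight : Fin n → Lex (Fin m → ℤ) := fun j => toLex fun i => W i j

theorem weight_colWeight (α : Fin n →₀ ℕ) :
    Finsupp.weight (colWeight W) α = toLex (wdeg W α) := by
  rw [Finsupp.weight_eq_sum]
  change ∑ j, α j • (fun i => W i j) = wdeg W α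
  funext i
  simp [wdeg, Finset.sum_apply]

variable {W}

theorem PositiveGrading.colWeight_pos (hW : PositiveGrading W) (j : Fin n) :
    0 < colWeight W j := by
  obtain ⟨i, hpos, hzero⟩ := hW.2.2 j
  exact ⟨i, fun i' hi' => (hzero i' hi').symm, hpos⟩

theorem IsWHomogeneousVec.isWeightedHomogeneousVec {K : Type*} [CommSemiring K] {r : ℕ}
    {δ : Fin r → Fin m → ℤ} {v : Fin r → MvPolynomial (Fin n) K} {d : Fin m → ℤ}
    (hv : IsWHomogeneousVec W δ v d) :
    IsWeightedHomogeneousVec (colWeight W) (fun i => toLex (δ i)) v (toLex d) := by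
  intro i α hα
  rw [weight_colWeight, hv i α (mem_support_iff.mpr hα), toLex_sub]

end WeightMatrix

/-- Adding a top-degree generator preserves minimality: if `g_1,…,g_s` is a minimal system
of homogeneous generators of `M`, and `h ∉ M` is homogeneous of degree `≥_Lex` all the
degrees of the `g_k`, then `g_1,…,g_s,h` is a minimal system of generators of
`M + Span_P(h)`. -/
theorem stmt_12 {K : Type*} [Field K] {m n r s : ℕ} (W : Matrix (Fin m) (Fin n) ℤ)
    (hW : PositiveGrading W) (δ : Fin r → Fin m → ℤ)
    (g : Fin s → (Fin r → MvPolynomial (Fin n) K)) (d : Fin s → Fin m → ℤ)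
    (hgh : ∀ k, IsWHomogeneousVec W δ (g k) (d k))
    (hmin : ∀ k : Fin s, g k ∉ Submodule.span (MvPolynomial (Fin n) K) (g '' {j | j ≠ k}))
    (h : Fin r → MvPolynomial (Fin n) K) (dh : Fin m → ℤ)
    (hhhom : IsWHomogeneousVec W δ h dh)
    (hhM : h ∉ Submodule.span (MvPolynomial (Fin n) K) (Set.range g))
    (hdeg : ∀ k : Fin s, toLex (d k) ≤ toLex dh) :
    ∀ k : Fin (s + 1),
      (Fin.snoc g h : Fin (s + 1) → (Fin r → MvPolynomial (Fin n) K)) k ∉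
        Submodule.span (MvPolynomial (Fin n) K)
          ((Fin.snoc g h : Fin (s + 1) → (Fin r → MvPolynomial (Fin n) K)) '' {j | j ≠ k}) := by
  intro k
  induction k using Fin.lastCases with
  | last => rwa [Fin.snoc_last, Fin.snoc_image_ne_last]
  | cast k =>
    rw [Fin.snoc_castSucc, Fin.snoc_image_ne_castSucc]
    exact IsWeightedHomogeneousVec.notMem_span_insert hW.colWeight_pos
      (fun j => (hgh j).isWeightedHomogeneousVec) hhhom.isWeightedHomogeneousVec (hmin k)
      (fun hspan => hhM (Submodule.span_mono (Set.image_subset_range g _) hspan)) (hdeg k)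
end
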